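/- If K is a triangulated n-sphere admitting a simplicial map of degree 3 to S^n_{n+2}, then K has at least n + 6 vertices. -/

import Mathlib

open Finset

/-- An abstract simplicial complex on vertex type `V`: a collection of nonempty
finite sets of vertices closed under taking nonempty subsets. -/
structure AbsCx (V : Type*) where
  faces : Set (Finset V)
  down_closed : ∀ ⦃s t : Finset V⦄, s ∈ faces → t ⊆ s → t.Nonempty → t ∈ faces
  nonempty_of_mem : ∀ ⦃s⦄, s ∈ faces → s.Nonempty

namespace AbsCx

variable {V W : Type*}

/-- The vertices of a complex. -/
def vertexSet (K : AbsCx V) : Set V := {v | {v} ∈ K.faces}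

/-- The `n`-dimensional faces (given by `n+1` vertices). -/
def facetsOfDim (K : AbsCx V) (n : ℕ) : Set (Finset V) :=
  {s | s ∈ K.faces ∧ s.card = n + 1}

/-- A simplicial map sends faces to faces. -/
def IsSimplicialMap [DecidableEq W] (K : AbsCx V) (L : AbsCx W) (f : V → W) : Prop :=
  ∀ s ∈ K.faces, s.image f ∈ L.faces

/-- Geometric realization of an abstract simplicial complex, as a subspace of `V → ℝ`. -/
def realization (K : AbsCx V) : Set (V → ℝ) :=
  {g | (∀ v, 0 ≤ g v) ∧ ∃ s ∈ K.faces, (∀ v, v ∉ s → g v = 0) ∧ ∑ v ∈ s, g v = 1}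

/-- `K` is a triangulation of the `n`-sphere. -/
def IsSphereTriangulation (n : ℕ) (K : AbsCx V) : Prop :=
  Nonempty (K.realization ≃ₜ Metric.sphere (0 : EuclideanSpace ℝ (Fin (n+1))) 1)

/-- `K` is a triangulation of the closed `n`-disc. -/
def IsDiscTriangulation (n : ℕ) (K : AbsCx V) : Prop :=
  Nonempty (K.realization ≃ₜ Metric.closedBall (0 : EuclideanSpace ℝ (Fin n)) 1)

/-- `K` triangulates a closed (compact, boundaryless = locally Euclidean) topological
`n`-manifold. -/
def IsClosedManifoldTriangulation (n : ℕ) (K : AbsCx V) : Prop :=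
  ∃ (M : Type) (ts : TopologicalSpace M),
    @CompactSpace M ts ∧ Nonempty (@ChartedSpace (EuclideanSpace ℝ (Fin n)) _ M ts) ∧
      Nonempty (@Homeomorph (K.realization) M _ ts)

/-- A coherent orientation of the `n`-dimensional faces of `K`: a sign function on
ordered `(n+1)`-tuples of vertices, alternating under permutations, equal to `±1`
exactly on the orderings of `n`-faces, and such that two facets sharing an
`(n-1)`-face (i.e. orderings differing in exactly one coordinate) get opposite signs. -/
structure CoherentOrientation [DecidableEq V] (n : ℕ) (K : AbsCx V) where
  sign : (Fin (n+1) → V) → ℤ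
  sign_perm : ∀ (x : Fin (n+1) → V) (σ : Equiv.Perm (Fin (n+1))),
    sign (x ∘ σ) = (Equiv.Perm.sign σ : ℤ) * sign x
  sign_unit : ∀ x : Fin (n+1) → V, Function.Injective x →
    Finset.image x Finset.univ ∈ K.faces → sign x = 1 ∨ sign x = -1
  sign_zero : ∀ x : Fin (n+1) → V,
    ¬ Function.Injective x ∨ Finset.image x Finset.univ ∉ K.faces → sign x = 0
  coherent : ∀ x y : Fin (n+1) → V,
    (∃ i, x i ≠ y i ∧ ∀ j, j ≠ i → x j = y j) →
    sign x ≠ 0 → sign y ≠ 0 → sign y = - sign x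

open scoped Classical in
/-- The algebraic number of preimages of the ordered simplex `y` under `f`. -/
noncomputable def algSum [Fintype V] {n : ℕ}
    (sgn : (Fin (n+1) → V) → ℤ) (f : V → W) (y : Fin (n+1) → W) : ℤ :=
  ∑ x : Fin (n+1) → V, if f ∘ x = y then sgn x else 0

/-- `f` has degree `d`: the algebraic number of preimages of every positively
oriented facet of the target equals `d`. -/
def HasDegree [Fintype V] [DecidableEq V] [DecidableEq W] {n : ℕ}
    {K : AbsCx V} {L : AbsCx W}
    (oK : CoherentOrientation n K) (oL : CoherentOrientation n L)
    (f : V → W) (d : ℤ) : Prop :=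
  ∀ y : Fin (n+1) → W, oL.sign y = 1 → algSum oK.sign f y = d

/-- The standard `n`-sphere `S^n_{n+2}`: the boundary complex of the `(n+1)`-simplex,
i.e. all proper nonempty subsets of `n+2` vertices. -/
def stdSphere (n : ℕ) : AbsCx (Fin (n+2)) where
  faces := {s | s.Nonempty ∧ s ≠ Finset.univ}
  down_closed := fun {s t} hs hts ht =>
    ⟨ht, fun h => hs.2 (Finset.univ_subset_iff.mp (h ▸ hts))⟩
  nonempty_of_mem := fun {s} hs => hs.1

/-- Boundary edges of a 2-dimensional complex: edges lying in exactly one triangle. -/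
def boundaryEdges (K : AbsCx V) : Set (Finset V) :=
  {e | e ∈ K.faces ∧ e.card = 2 ∧ Set.ncard {s | s ∈ K.faces ∧ s.card = 3 ∧ e ⊆ s} = 1}

end AbsCx

/-!
Fix a positively oriented facet `y` of `S^n_{n+2}`. Degree `3` forces at least three positively
oriented preimages of `y`. Coherence of the orientation of `K` says that two positively oriented
facets agreeing in all but one coordinate coincide, so forgetting any coordinate `j₀` is injective
on these preimages; hence the product of the fibre sizes of `f` over the other vertices of `y` is
at least `3`, which forces their sum to be at least `n + 2` and one of them to be at least `2`.
Choosing `y` to avoid a vertex with the largest fibre and `j₀` to be a coordinate with the largest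
fibre among those of `y`, the fibres over the `n + 2` target vertices add up to at least
`2 + 2 + (n + 2)`. For `n = 0` the product is empty, so there is no map of degree `3` at all.
-/

namespace Finset

variable {ι : Type*}

theorem exists_one_lt_of_one_lt_prod {s : Finset ι} {g : ι → ℕ} (h : 1 < ∏ i ∈ s, g i) :
    ∃ i ∈ s, 1 < g i := by
  by_contra! hg
  exact (prod_le_one' hg).not_gt h

theorem card_add_two_le_sum_of_three_le_prod {s : Finset ι} {g : ι → ℕ}
    (h : 3 ≤ ∏ i ∈ s, g i) : #s + 2 ≤ ∑ i ∈ s, g i := by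
  have hpos : ∀ i ∈ s, g i ≠ 0 := prod_ne_zero_iff.mp (by omega)
  have hprod : ∏ i ∈ s, g i ≤ 2 ^ ∑ i ∈ s, (g i - 1) := by
    rw [← prod_pow_eq_pow_sum]
    exact prod_le_prod' fun i _ => by
      have := Nat.lt_two_pow_self (n := g i - 1)
      omega
  have hsum : ∑ i ∈ s, g i = ∑ i ∈ s, (g i - 1) + #s := by
    rw [card_eq_sum_ones, ← sum_add_distrib]
    exact sum_congr rfl fun i hi => by have := hpos i hi; omega
  have : 2 ≤ ∑ i ∈ s, (g i - 1) := by
    by_contra! hlt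
    have : 2 ^ ∑ i ∈ s, (g i - 1) ≤ 2 ^ 1 := Nat.pow_le_pow_right (by norm_num) (by omega)
    omega
  omega

end Finset

namespace AbsCx

variable {V W : Type*}

section Fibres

variable [Fintype V]

open scoped Classical in
noncomputable def vertexFiber (K : AbsCx V) (f : V → W) (w : W) : Finset V :=
  {u ∈ K.vertexSet.toFinset | f u = w}

theorem sum_card_vertexFiber [Fintype W] (K : AbsCx V) (f : V → W) :
    ∑ w, #(K.vertexFiber f w) = K.vertexSet.ncard := by
  classical
  rw [Set.ncard_eq_toFinset_card', card_eq_sum_card_fiberwise fun u _ => mem_univ (f u)]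
  simp only [vertexFiber]

end Fibres

namespace CoherentOrientation

variable [DecidableEq V] {n : ℕ}

section

variable {K : AbsCx V} (o : CoherentOrientation n K)

theorem sign_eq_one_or_eq_zero_or_eq_neg_one (x : Fin (n + 1) → V) :
    o.sign x = 1 ∨ o.sign x = 0 ∨ o.sign x = -1 := by
  by_cases h : Function.Injective x ∧ image x univ ∈ K.faces
  · rcases o.sign_unit x h.1 h.2 with h' | h' <;> simp [h']
  · exact Or.inr (Or.inl (o.sign_zero x (not_and_or.mp h)))

theorem image_mem_faces_of_sign_ne_zero {x : Fin (n + 1) → V} (hx : o.sign x ≠ 0) :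
    image x univ ∈ K.faces := by
  by_contra h
  exact hx (o.sign_zero x (Or.inr h))

theorem mem_vertexSet_of_sign_ne_zero {x : Fin (n + 1) → V} (hx : o.sign x ≠ 0)
    (j : Fin (n + 1)) : x j ∈ K.vertexSet :=
  K.down_closed (o.image_mem_faces_of_sign_ne_zero hx)
    (singleton_subset_iff.mpr (mem_image_of_mem x (mem_univ j))) (singleton_nonempty _)

theorem eq_of_removeNth_eq {x x' : Fin (n + 1) → V} (hx : o.sign x = 1) (hx' : o.sign x' = 1)
    (j₀ : Fin (n + 1)) (h : Fin.removeNth j₀ x = Fin.removeNth j₀ x') : x = x' := by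
  by_cases hj₀ : x j₀ = x' j₀
  · rw [← Fin.insertNth_self_removeNth j₀ x, ← Fin.insertNth_self_removeNth j₀ x', hj₀, h]
  · have hagree : ∀ j, j ≠ j₀ → x j = x' j := fun j hj => by
      obtain ⟨i, rfl⟩ := Fin.exists_succAbove_eq hj
      exact congrFun h i
    have := o.coherent x x' ⟨j₀, hj₀, hagree⟩ (by simp [hx]) (by simp [hx'])
    rw [hx, hx'] at this
    norm_num at this

end

theorem exists_perm_sign_eq_one {K : AbsCx V} (o : CoherentOrientation (n + 1) K)
    {x : Fin (n + 2) → V} (hx : o.sign x ≠ 0) : ∃ σ : Equiv.Perm (Fin (n + 2)),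
      o.sign (x ∘ σ) = 1 := by
  rcases o.sign_eq_one_or_eq_zero_or_eq_neg_one x with h | h | h
  · exact ⟨1, by simpa using h⟩
  · exact absurd h hx
  · refine ⟨Equiv.swap 0 1, ?_⟩
    rw [o.sign_perm, Equiv.Perm.sign_swap (by simp), h]
    norm_num

theorem sign_succAbove_ne_zero (o : CoherentOrientation n (stdSphere n))
    (w : Fin (n + 2)) : o.sign w.succAbove ≠ 0 := by
  have hface : image w.succAbove univ ∈ (stdSphere n).faces := by
    rw [Fin.image_succAbove_univ]
    exact ⟨⟨w.succAbove 0, by simp [Fin.succAbove_ne]⟩, by simp [eq_univ_iff_forall]⟩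
  rcases o.sign_unit _ (Fin.succAbove_right_injective) hface with h | h <;> simp [h]

theorem exists_sign_eq_one_of_stdSphere_zero
    (o : CoherentOrientation 0 (stdSphere 0)) : ∃ y, o.sign y = 1 := by
  have h0 := o.sign_succAbove_ne_zero 0
  have h1 := o.sign_succAbove_ne_zero 1
  have hopp := o.coherent _ _ ⟨0, by decide, fun j hj => absurd (Fin.fin_one_eq_zero j) hj⟩ h0 h1
  rcases o.sign_eq_one_or_eq_zero_or_eq_neg_one (Fin.succAbove 0) with h | h | h
  · exact ⟨_, h⟩
  · exact absurd h h0
  · exact ⟨Fin.succAbove 1, by omega⟩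

end CoherentOrientation

section Degree

variable [Fintype V] [DecidableEq V] {n : ℕ} {K : AbsCx V}

open scoped Classical in
theorem algSum_le_card_sign_eq_one (o : CoherentOrientation n K) (f : V → W)
    (y : Fin (n + 1) → W) :
    algSum o.sign f y ≤ #{x | f ∘ x = y ∧ o.sign x = 1} := by
  rw [algSum, ← sum_boole]
  refine sum_le_sum fun x _ => ?_
  by_cases hfx : f ∘ x = y
  · rcases o.sign_eq_one_or_eq_zero_or_eq_neg_one x with h | h | h <;> simp [hfx, h]
  · simp [hfx]

open scoped Classical in
theorem card_sign_eq_one_le_prod_card_vertexFiber (o : CoherentOrientation n K) (f : V → W)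
    (y : Fin (n + 1) → W) (j₀ : Fin (n + 1)) :
    #{x | f ∘ x = y ∧ o.sign x = 1} ≤ ∏ i, #(K.vertexFiber f (y (j₀.succAbove i))) := by
  rw [← Fintype.card_piFinset]
  refine card_le_card_of_injOn (Fin.removeNth j₀) (fun x hx => ?_) fun x hx x' hx' h => ?_
  · simp only [mem_coe, mem_filter_univ] at hx
    simp only [mem_coe, Fintype.mem_piFinset, vertexFiber, mem_filter, Set.mem_toFinset,
      Fin.removeNth_apply]
    exact fun i => ⟨o.mem_vertexSet_of_sign_ne_zero (by simp [hx.2]) _, congrFun hx.1 _⟩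
  · simp only [mem_coe, mem_filter_univ] at hx hx'
    exact o.eq_of_removeNth_eq hx.2 hx'.2 j₀ h

theorem three_le_prod_card_vertexFiber (o : CoherentOrientation n K) (f : V → W)
    {y : Fin (n + 1) → W} (hy : algSum o.sign f y = 3) (j₀ : Fin (n + 1)) :
    3 ≤ ∏ i, #(K.vertexFiber f (y (j₀.succAbove i))) := by
  classical
  have hle := algSum_le_card_sign_eq_one o f y
  rw [hy] at hle
  have := card_sign_eq_one_le_prod_card_vertexFiber o f y j₀
  omega

end Degree

end AbsCx

open AbsCx

theorem stmt13_general {V : Type*} [Fintype V] [DecidableEq V] (n : ℕ) (K : AbsCx V)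
    (oK : CoherentOrientation n K) (oL : CoherentOrientation n (stdSphere n))
    (f : V → Fin (n + 2))
    (hdeg : HasDegree oK oL f 3) :
    n + 6 ≤ K.vertexSet.ncard := by
  rw [← sum_card_vertexFiber K f]
  cases n with
  | zero =>
    obtain ⟨y, hy⟩ := oL.exists_sign_eq_one_of_stdSphere_zero
    simpa using three_le_prod_card_vertexFiber oK f (hdeg y hy) 0
  | succ n =>
    let c : Fin (n + 3) → ℕ := fun w => #(K.vertexFiber f w)
    obtain ⟨w, -, hw⟩ := exists_max_image univ c univ_nonempty
    obtain ⟨σ, hσ⟩ := oL.exists_perm_sign_eq_one (oL.sign_succAbove_ne_zero w)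
    set y := w.succAbove ∘ σ
    obtain ⟨j₀, -, hj₀⟩ := exists_max_image univ (fun j => c (y j)) univ_nonempty
    have hprod : 3 ≤ ∏ i, c (y (j₀.succAbove i)) :=
      three_le_prod_card_vertexFiber oK f (hdeg y hσ) j₀
    obtain ⟨i, -, hi⟩ := exists_one_lt_of_one_lt_prod (by omega : 1 < ∏ i, c (y (j₀.succAbove i)))
    have hsum := card_add_two_le_sum_of_three_le_prod hprod
    have hsplit : ∑ v, #(K.vertexFiber f v) = c w + c (y j₀) + ∑ i, c (y (j₀.succAbove i)) := by
      rw [Fin.sum_univ_succAbove c w, ← Equiv.sum_comp σ, Fin.sum_univ_succAbove _ j₀, add_assoc]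
      rfl
    have hw_ge := hw (y (j₀.succAbove i)) (mem_univ _)
    have hj₀_ge := hj₀ (j₀.succAbove i) (mem_univ _)
    simp only [card_univ, Fintype.card_fin] at hsum
    omega

/-- A triangulated `n`-sphere admitting a simplicial degree `3` map to `S^n_{n+2}`
has at least `n + 6` vertices. -/
theorem stmt13 {V : Type*} [Fintype V] [DecidableEq V] (n : ℕ) (K : AbsCx V)
    (hK : K.IsSphereTriangulation n)
    (oK : CoherentOrientation n K) (oL : CoherentOrientation n (stdSphere n))
    (f : V → Fin (n + 2)) (hf : K.IsSimplicialMap (stdSphere n) f)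
    (hdeg : HasDegree oK oL f 3) :
    n + 6 ≤ K.vertexSet.ncard :=
  stmt13_general n K oK oL f hdeg
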